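/- arXiv:2604.23454 — 2 statements merged into one kernel-verified Lean document; each statement's English description precedes it below -/
import Mathlib

section
/- The anchored ELBO differs from the structured ELBO by a nonnegative expected KL term: L_S(q,θ) − L_A(f_0,q,θ) = Σ_{i=1}^n E_{q_i(f_i)}[KL(p(U_i | D_i, f_{0i}; θ) || p(U_i | D_i, f_i; θ))] ≥ 0. In particular L_A(f_0,q,θ) ≤ L_S(q,θ) for every anchor f_0. -/
open MeasureTheory

section
variable {𝒰 F : Type*} [MeasurableSpace 𝒰] [MeasurableSpace F]

/-- Kullback–Leibler divergence between two densities w.r.t. `μ`. -/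
noncomputable def KLdiv (μ : Measure 𝒰) (q p : 𝒰 → ℝ) : ℝ :=
  ∫ u, q u * Real.log (q u / p u) ∂μ

/-- The anchored ELBO
`L_A = Σ_i E_{q_i(f) p(U|D_i,f₀ᵢ)}[log p(D_i,U,f) − log p(U|D_i,f₀ᵢ) − log q_i(f)]`. -/
noncomputable def ELBO_A (μ : Measure 𝒰) (ν : Measure F) {n : ℕ}
    (pJoint : Fin n → 𝒰 → F → ℝ) (pU : Fin n → F → 𝒰 → ℝ)
    (q : Fin n → F → ℝ) (f0 : Fin n → F) : ℝ :=
  ∑ i, ∫ f, q i f * ∫ u, pU i (f0 i) u *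
      (Real.log (pJoint i u f) - Real.log (pU i (f0 i) u) - Real.log (q i f))
      ∂μ ∂ν

/-- The structured ELBO
`L_S = Σ_i E_{q_i(f) p(U|D_i,f)}[log p(D_i,U,f) − log p(U|D_i,f) − log q_i(f)]`. -/
noncomputable def ELBO_S (μ : Measure 𝒰) (ν : Measure F) {n : ℕ}
    (pJoint : Fin n → 𝒰 → F → ℝ) (pU : Fin n → F → 𝒰 → ℝ)
    (q : Fin n → F → ℝ) : ℝ :=
  ∑ i, ∫ f, q i f * ∫ u, pU i f u *
      (Real.log (pJoint i u f) - Real.log (pU i f u) - Real.log (q i f))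
      ∂μ ∂ν

/-- Gibbs' inequality: the KL divergence between two positive probability
densities is nonnegative. -/
lemma KLdiv_nonneg {μ : Measure 𝒰} {a b : 𝒰 → ℝ}
    (ha : ∀ u, 0 < a u) (hb : ∀ u, 0 < b u)
    (ha1 : ∫ u, a u ∂μ = 1) (hb1 : ∫ u, b u ∂μ = 1)
    (hint : Integrable (fun u => a u * Real.log (a u / b u)) μ) :
    0 ≤ KLdiv μ a b := by
  have hai : Integrable a μ := integrable_of_integral_eq_one ha1
  have hbi : Integrable b μ := integrable_of_integral_eq_one hb1
  have key : ∀ u, a u - b u ≤ a u * Real.log (a u / b u) := by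
    intro u
    have h1 : Real.log (b u / a u) ≤ b u / a u - 1 :=
      Real.log_le_sub_one_of_pos (div_pos (hb u) (ha u))
    have h2 : Real.log (a u / b u) = - Real.log (b u / a u) := by
      rw [← Real.log_inv, inv_div]
    have h3 := mul_le_mul_of_nonneg_left h1 (ha u).le
    have h4 : a u * (b u / a u - 1) = b u - a u := by
      rw [mul_sub, mul_one, mul_div_cancel₀ _ (ha u).ne']
    rw [h2]
    nlinarith
  have h0 : (0 : ℝ) = ∫ u, (a u - b u) ∂μ := by
    rw [integral_sub hai hbi, ha1, hb1]; ring
  calc (0 : ℝ) = ∫ u, (a u - b u) ∂μ := h0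
    _ ≤ ∫ u, a u * Real.log (a u / b u) ∂μ :=
        integral_mono (hai.sub hbi) hint key
    _ = KLdiv μ a b := rfl

/-- **ELBO gap.**  The structured ELBO exceeds the anchored ELBO by the
nonnegative expected KL term
`Σ_i E_{q_i(f)}[KL(p(U|D_i,f₀ᵢ) ‖ p(U|D_i,f))]`; in particular
`L_A ≤ L_S` for every anchor `f₀`. -/
theorem anchored_elbo_gap
    (μ : Measure 𝒰) (ν : Measure F) [SigmaFinite μ] [SigmaFinite ν] {n : ℕ}
    (pJoint : Fin n → 𝒰 → F → ℝ) (pU : Fin n → F → 𝒰 → ℝ)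
    (pDf : Fin n → F → ℝ) (q : Fin n → F → ℝ) (f0 : Fin n → F)
    -- the joint density factors as `p(D_i,U,f) = p(D_i,f) p(U|D_i,f)`
    (hfact : ∀ i u f, pJoint i u f = pDf i f * pU i f u)
    -- positivity of the densities
    (hpU_pos : ∀ i f u, 0 < pU i f u) (hpDf_pos : ∀ i f, 0 < pDf i f)
    (hq_pos : ∀ i f, 0 < q i f)
    -- `p(U|D_i,f)` and `q_i` are probability densities
    (hpU_prob : ∀ i f, ∫ u, pU i f u ∂μ = 1)
    (hq_prob : ∀ i, ∫ f, q i f ∂ν = 1)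
    -- all expectations and KL divergences are finite
    (hint_A : ∀ i, Integrable (fun x : 𝒰 × F => q i x.2 * pU i (f0 i) x.1 *
      (Real.log (pJoint i x.1 x.2) - Real.log (pU i (f0 i) x.1)
        - Real.log (q i x.2))) (μ.prod ν))
    (hint_S : ∀ i, Integrable (fun x : 𝒰 × F => q i x.2 * pU i x.2 x.1 *
      (Real.log (pJoint i x.1 x.2) - Real.log (pU i x.2 x.1)
        - Real.log (q i x.2))) (μ.prod ν))
    (hint_KL : ∀ i f, Integrable
      (fun u => pU i (f0 i) u * Real.log (pU i (f0 i) u / pU i f u)) μ)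
    (hint_KLmix : ∀ i, Integrable
      (fun f => q i f * KLdiv μ (pU i (f0 i)) (pU i f)) ν) :
    ELBO_S μ ν pJoint pU q - ELBO_A μ ν pJoint pU q f0
        = ∑ i, ∫ f, q i f * KLdiv μ (pU i (f0 i)) (pU i f) ∂ν
    ∧ ELBO_A μ ν pJoint pU q f0 ≤ ELBO_S μ ν pJoint pU q := by
  set c : Fin n → F → ℝ := fun i f => Real.log (pDf i f) - Real.log (q i f) with hc
  have hlog : ∀ i u f, Real.log (pJoint i u f)
      = Real.log (pDf i f) + Real.log (pU i f u) := fun i u f => by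
    rw [hfact]; exact Real.log_mul (hpDf_pos i f).ne' (hpU_pos i f u).ne'
  have hpUint : ∀ i f, Integrable (fun u => pU i f u) μ := fun i f =>
    integrable_of_integral_eq_one (hpU_prob i f)
  -- inner integral for the structured ELBO
  have innerS : ∀ i f, (∫ u, pU i f u *
      (Real.log (pJoint i u f) - Real.log (pU i f u) - Real.log (q i f)) ∂μ)
      = c i f := by
    intro i f
    have heq : (fun u => pU i f u *
        (Real.log (pJoint i u f) - Real.log (pU i f u) - Real.log (q i f)))
        = fun u => pU i f u * c i f := funext fun u => by
      rw [hlog]; simp only [hc]; ring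
    rw [heq, integral_mul_const, hpU_prob, one_mul]
  -- inner integral for the anchored ELBO
  have innerA : ∀ i f, (∫ u, pU i (f0 i) u *
      (Real.log (pJoint i u f) - Real.log (pU i (f0 i) u) - Real.log (q i f)) ∂μ)
      = c i f - KLdiv μ (pU i (f0 i)) (pU i f) := by
    intro i f
    have heq : (fun u => pU i (f0 i) u *
        (Real.log (pJoint i u f) - Real.log (pU i (f0 i) u) - Real.log (q i f)))
        = fun u => pU i (f0 i) u * c i f
            - pU i (f0 i) u * Real.log (pU i (f0 i) u / pU i f u) :=
      funext fun u => by
        rw [hlog, Real.log_div (hpU_pos i (f0 i) u).ne' (hpU_pos i f u).ne']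
        simp only [hc]; ring
    rw [heq, integral_sub ((hpUint i (f0 i)).mul_const _) (hint_KL i f),
      integral_mul_const, hpU_prob, one_mul]
    rfl
  -- integrability of the anchored outer integrand
  have hAint : ∀ i, Integrable
      (fun f => q i f * (c i f - KLdiv μ (pU i (f0 i)) (pU i f))) ν := by
    intro i
    have h := (hint_A i).integral_prod_right
    have heq : (fun f => ∫ u, q i f * pU i (f0 i) u *
        (Real.log (pJoint i u f) - Real.log (pU i (f0 i) u)
          - Real.log (q i f)) ∂μ)
        = fun f => q i f * (c i f - KLdiv μ (pU i (f0 i)) (pU i f)) := by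
      funext f
      rw [show (fun u => q i f * pU i (f0 i) u *
          (Real.log (pJoint i u f) - Real.log (pU i (f0 i) u)
            - Real.log (q i f)))
          = fun u => q i f * (pU i (f0 i) u *
            (Real.log (pJoint i u f) - Real.log (pU i (f0 i) u)
              - Real.log (q i f))) from funext fun u => by ring,
        integral_const_mul, innerA]
    rwa [heq] at h
  -- q·c is integrable
  have hqcint : ∀ i, Integrable (fun f => q i f * c i f) ν := by
    intro i
    have h := (hAint i).add (hint_KLmix i)
    exact h.congr (Filter.Eventually.of_forall fun f => by
      simp only [Pi.add_apply]; ring)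
  -- the gap identity
  have hgap : ELBO_S μ ν pJoint pU q - ELBO_A μ ν pJoint pU q f0
      = ∑ i, ∫ f, q i f * KLdiv μ (pU i (f0 i)) (pU i f) ∂ν := by
    simp only [ELBO_S, ELBO_A, innerS, innerA, ← Finset.sum_sub_distrib]
    refine Finset.sum_congr rfl fun i _ => ?_
    rw [← integral_sub (hqcint i) (hAint i)]
    congr 1; funext f; ring
  have hnonneg : ∀ i ∈ Finset.univ,
      0 ≤ ∫ f, q i f * KLdiv μ (pU i (f0 i)) (pU i f) ∂ν := fun i _ =>
    integral_nonneg fun f => mul_nonneg (hq_pos i f).le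
      (KLdiv_nonneg (hpU_pos i (f0 i)) (hpU_pos i f)
        (hpU_prob i (f0 i)) (hpU_prob i f) (hint_KL i f))
  refine ⟨hgap, ?_⟩
  have := Finset.sum_nonneg hnonneg
  linarith


end
end

section
/- The anchored ELBO can be rewritten as L_A(f_0,q,θ) = −Σ_{i=1}^n E_{q_i(f_i)}[KL(p(U_i|D_i,f_{0i};θ) || p(U_i|D_i,f_i;θ))] + C(q,θ), where C(q,θ) = Σ_i E_{q_i(f_i)}[log p(D_i,f_i;θ) − log q_i(f_i)] does not depend on the anchor f_0. -/
open MeasureTheory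

section
variable {𝒰 F : Type*} [MeasurableSpace 𝒰] [MeasurableSpace F]

/-- **Rewriting the anchored ELBO.**
`L_A(f₀,q,θ) = −Σ_i E_{q_i(f)}[KL(p(U|D_i,f₀ᵢ;θ) ‖ p(U|D_i,f;θ))] + C(q,θ)`,
where `C(q,θ) = Σ_i E_{q_i(f)}[log p(D_i,f;θ) − log q_i(f)]` does not depend
on the anchor `f₀`. -/
theorem anchored_elbo_rewrite
    (μ : Measure 𝒰) (ν : Measure F) [SigmaFinite μ] [SigmaFinite ν] {n : ℕ}
    (pJoint : Fin n → 𝒰 → F → ℝ) (pU : Fin n → F → 𝒰 → ℝ)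
    (pDf : Fin n → F → ℝ) (q : Fin n → F → ℝ) (f0 : Fin n → F)
    -- the joint density factors as `p(D_i,U,f) = p(D_i,f) p(U|D_i,f)`
    (hfact : ∀ i u f, pJoint i u f = pDf i f * pU i f u)
    -- positivity of the densities
    (hpU_pos : ∀ i f u, 0 < pU i f u) (hpDf_pos : ∀ i f, 0 < pDf i f)
    (hq_pos : ∀ i f, 0 < q i f)
    -- `p(U|D_i,f)` and `q_i` are probability densities
    (hpU_prob : ∀ i f, ∫ u, pU i f u ∂μ = 1)
    (hq_prob : ∀ i, ∫ f, q i f ∂ν = 1)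
    -- all expectations are finite
    (hint_A : ∀ i, Integrable (fun x : 𝒰 × F => q i x.2 * pU i (f0 i) x.1 *
      (Real.log (pJoint i x.1 x.2) - Real.log (pU i (f0 i) x.1)
        - Real.log (q i x.2))) (μ.prod ν))
    (hint_KL : ∀ i f, Integrable
      (fun u => pU i (f0 i) u * Real.log (pU i (f0 i) u / pU i f u)) μ)
    (hint_KLmix : ∀ i, Integrable
      (fun f => q i f * KLdiv μ (pU i (f0 i)) (pU i f)) ν)
    (hint_C : ∀ i, Integrable
      (fun f => q i f * (Real.log (pDf i f) - Real.log (q i f))) ν) :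
    ELBO_A μ ν pJoint pU q f0
      = -(∑ i, ∫ f, q i f * KLdiv μ (pU i (f0 i)) (pU i f) ∂ν)
        + ∑ i, ∫ f, q i f * (Real.log (pDf i f) - Real.log (q i f)) ∂ν := by

  unfold ELBO_A
  have key : ∀ i (f : F),
      q i f * ∫ u, pU i (f0 i) u *
        (Real.log (pJoint i u f) - Real.log (pU i (f0 i) u) - Real.log (q i f)) ∂μ
      = -(q i f * KLdiv μ (pU i (f0 i)) (pU i f))
        + q i f * (Real.log (pDf i f) - Real.log (q i f)) := by
    intro i f
    have hpU_int : Integrable (pU i (f0 i)) μ := by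
      by_contra h
      have h1 := hpU_prob i (f0 i)
      rw [integral_undef h] at h1
      exact one_ne_zero h1.symm
    have hinner : ∫ u, pU i (f0 i) u *
        (Real.log (pJoint i u f) - Real.log (pU i (f0 i) u) - Real.log (q i f)) ∂μ
        = -(KLdiv μ (pU i (f0 i)) (pU i f))
          + (Real.log (pDf i f) - Real.log (q i f)) := by
      have hrw : (fun u => pU i (f0 i) u *
          (Real.log (pJoint i u f) - Real.log (pU i (f0 i) u) - Real.log (q i f)))
          = fun u => -(pU i (f0 i) u * Real.log (pU i (f0 i) u / pU i f u))
            + pU i (f0 i) u * (Real.log (pDf i f) - Real.log (q i f)) := by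
        funext u
        rw [hfact, Real.log_mul (hpDf_pos i f).ne' (hpU_pos i f u).ne',
          Real.log_div (hpU_pos i (f0 i) u).ne' (hpU_pos i f u).ne']
        ring
      have h1 : Integrable (fun u => -(pU i (f0 i) u *
          Real.log (pU i (f0 i) u / pU i f u))) μ := (hint_KL i f).neg
      rw [hrw, integral_add h1 (hpU_int.mul_const _), integral_neg,
        integral_mul_const, hpU_prob, one_mul]
      rfl
    rw [hinner]; ring
  calc (∑ i, ∫ f, q i f * ∫ u, pU i (f0 i) u *
        (Real.log (pJoint i u f) - Real.log (pU i (f0 i) u) - Real.log (q i f)) ∂μ ∂ν)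
      = ∑ i, ∫ f, (-(q i f * KLdiv μ (pU i (f0 i)) (pU i f))
          + q i f * (Real.log (pDf i f) - Real.log (q i f))) ∂ν := by
        refine Finset.sum_congr rfl fun i _ => integral_congr_ae ?_
        filter_upwards with f using key i f
    _ = ∑ i, (-(∫ f, q i f * KLdiv μ (pU i (f0 i)) (pU i f) ∂ν)
          + ∫ f, q i f * (Real.log (pDf i f) - Real.log (q i f)) ∂ν) := by
        refine Finset.sum_congr rfl fun i _ => ?_
        have h1 : Integrable (fun f => -(q i f * KLdiv μ (pU i (f0 i)) (pU i f))) ν :=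
          (hint_KLmix i).neg
        rw [integral_add h1 (hint_C i), integral_neg]
    _ = _ := by rw [Finset.sum_add_distrib]; simp


end
end
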